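/- arXiv:0705.3114 — 5 statements merged into one kernel-verified Lean document; each statement's English description precedes it below -/
import Mathlib

section
/- Let G be a connected topological group acting continuously and effectively (faithfully) on a connected, locally path-connected, semilocally simply connected space M, with universal cover M̃ and lifted action of G̃. If g̃ ∈ G̃ acts trivially on M̃, then g̃ lies in π₁(G,e) ⊂ G̃ and a_{z₀}(g̃) is trivial; conversely every element of ker(a_{z₀}) ⊂ π₁(G,e) acts trivially on M̃. Hence the kernel of the G̃-action on M̃ equals ker(a_{z₀}). -/
/-- The path `t ↦ g t • z t`: the lifted action of a path of group elements starting at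
the identity on a path in `M`. -/
def actPath {G M : Type*} [TopologicalSpace G] [Group G] [IsTopologicalGroup G]
    [TopologicalSpace M] [MulAction G M] [ContinuousSMul G M]
    {g₁ : G} (g : Path (1 : G) g₁) {z₀ z₁ : M} (z : Path z₀ z₁) : Path z₀ (g₁ • z₁) where
  toFun := fun t => g t • z t
  continuous_toFun := by continuity
  source' := by simp
  target' := by simp

/-! In `G × M` the path `t ↦ (g t, z t)` is homotopic to the path that first runs along `g`
with `z₀` fixed and then along `z` with `g₁` fixed; pushing this forward along the action
gives `actPath g z ≃ (t ↦ g t • z₀) ⬝ g₁ • z`. For a loop `g` this is `a_{z₀}(g̃) ⬝ z`, so `g̃`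
fixes every class `[z]` exactly when `a_{z₀}(g̃)` is trivial. Conversely, if `g̃` fixes every
`[z]`, then `g₁` fixes every endpoint `z₁`, and `M` is path connected, so `g₁ = 1` by
effectiveness. -/

theorem Path.Homotopic.prod_trans_prod {X Y : Type*} [TopologicalSpace X] [TopologicalSpace Y]
    {x₀ x₁ : X} {y₀ y₁ : Y} (p : Path x₀ x₁) (q : Path y₀ y₁) :
    (p.prod q).Homotopic ((p.prod (Path.refl y₀)).trans ((Path.refl x₁).prod q)) := by
  rw [Path.trans_prod_eq_prod_trans]
  exact ⟨prodHomotopy (Path.Homotopy.transRefl p).symm (Path.Homotopy.reflTrans q).symm⟩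

section ActPath

variable {G M : Type*} [TopologicalSpace G] [Group G] [IsTopologicalGroup G]
  [TopologicalSpace M] [MulAction G M] [ContinuousSMul G M]

theorem actPath_homotopic_trans {g₁ : G} (g : Path (1 : G) g₁) {z₀ z₁ : M} (z : Path z₀ z₁) :
    (actPath g z).Homotopic
      ((actPath g (Path.refl z₀)).trans (z.map (continuous_const_smul g₁))) := by
  have h := (Path.Homotopic.prod_trans_prod g z).map
    ⟨fun p : G × M => p.1 • p.2, continuous_smul⟩
  rw [Path.map_trans] at h
  exact h.pathCast (one_smul G z₀).symm rfl

theorem actPath_loop_homotopic_trans (g : Path (1 : G) 1) {z₀ z₁ : M} (z : Path z₀ z₁) :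
    ((actPath g z).cast rfl (one_smul G z₁).symm).Homotopic
      (((actPath g (Path.refl z₀)).cast rfl (one_smul G z₀).symm).trans z) := by
  have hz : (z.map (continuous_const_smul (1 : G))).cast (one_smul G z₀).symm
      (one_smul G z₁).symm = z := by
    ext t
    exact one_smul G (z t)
  have h := (actPath_homotopic_trans g z).pathCast rfl (one_smul G z₁).symm
  rwa [Path.cast_trans _ _ _ (one_smul G z₀).symm, hz] at h

end ActPath

/-- for an effective action of a connected group `G` on `M`, an element
`g̃` of `G̃` (represented by a path `g` from the identity to `g₁`) acts trivially on the
universal cover `M̃` (i.e. for every path `z` from `z₀`, the class of `t ↦ g t • z t`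
equals the class of `z`) if and only if `g̃ ∈ π₁(G,e)` (i.e. `g₁ = 1`) and
`a_{z₀}(g̃)` is the trivial class (the loop `t ↦ g t • z₀` is null-homotopic).
Hence the kernel of the `G̃`-action on `M̃` equals `ker a_{z₀}`. -/
theorem stmt6 {G M : Type*} [TopologicalSpace G] [Group G] [IsTopologicalGroup G]
    [TopologicalSpace M] [ConnectedSpace M] [LocallyPathConnectedSpace M]
    [MulAction G M] [ContinuousSMul G M] (z₀ : M)
    (heff : ∀ g : G, (∀ m : M, g • m = m) → g = 1) :
    ∀ {g₁ : G} (g : Path (1 : G) g₁),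
      (∀ {z₁ : M} (z : Path z₀ z₁), ∃ h : g₁ • z₁ = z₁,
          Path.Homotopic ((actPath g z).cast rfl h.symm) z) ↔
      (∃ h : g₁ = 1,
          Path.Homotopic ((actPath g (Path.refl z₀)).cast rfl (by rw [h, one_smul]))
            (Path.refl z₀)) := by
  intro g₁ g
  constructor
  · intro H
    have : PathConnectedSpace M := pathConnectedSpace_iff_connectedSpace.mpr ‹_›
    obtain rfl : g₁ = 1 := heff g₁ fun m => (H (PathConnectedSpace.somePath z₀ m)).1
    exact ⟨rfl, (H (Path.refl z₀)).2⟩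
  · rintro ⟨rfl, hloop⟩ z₁ z
    exact ⟨one_smul G z₁, (actPath_loop_homotopic_trans g z).trans
      ((hloop.hcomp (Path.Homotopic.refl z)).trans (Path.Homotopic.refl_trans z))⟩
end

section
/- Let (M,ω) be a connected symplectic manifold with a symplectic action of a connected Lie group G, and fix z₀ ∈ M. For a homotopy class x̃ of paths x : [0,1] → M with x(0) = z₀, and ξ in the Lie algebra 𝔤, the integral ∫₀¹ ω(x(t))(ξ_M(x(t)), ẋ(t)) dt depends only on the homotopy class of x rel endpoints. The resulting map J : M̃ → 𝔤*, ⟨J(x̃), ξ⟩ = ∫₀¹ x*(ι_{ξ_M} ω), is a momentum map for the lifted G̃-action on (M̃, q*ω): for each ξ ∈ 𝔤, d⟨J,ξ⟩ = ι_{ξ_{M̃}} (q*ω). -/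
open intervalIntegral

/-!
A closed 1-form `α` has a primitive on every ball inside `s` (Poincaré lemma), and two primitives
on a convex set differ by a constant. By compactness, a fine enough grid cuts the parameter square
of a homotopy into cells each mapped into such a ball. Along a `C¹` path the integral of `α` is the
sum of the increments of these primitives between consecutive grid points, and this sum still
makes sense along the merely continuous intermediate rows. Crossing one strip of cells does not
change it, because the two rows bounding the strip share their endpoints and the primitives on
adjacent cells agree up to constants; hence the integral is a homotopy invariant. Near `u₀` the
integral along `H(·, u)` is such a sum for fixed primitives, and its derivative in `u` telescopes to
the term of the endpoint `H(1, u₀)`, the initial point being fixed.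
-/

open Metric Set

/-- If each `g i` is a primitive of a 1-form `α` near `p i` and `p (i + 1)`, this is the
integral of `α` along the polygon `p 0, …, p N`; it makes sense for the grid points of a merely
continuous path. -/
def incrementSum {E : Type*} (g : ℕ → E → ℝ) (p : ℕ → E) (N : ℕ) : ℝ :=
  ∑ i ∈ Finset.range N, (g i (p (i + 1)) - g i (p i))

theorem incrementSum_succ {E : Type*} (g : ℕ → E → ℝ) (p : ℕ → E) (N : ℕ) :
    incrementSum g p (N + 1) = incrementSum g p N + (g N (p (N + 1)) - g N (p N)) :=
  Finset.sum_range_succ _ _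

section UniformPartition

variable {N : ℕ}

theorem div_natCast_mem_Icc {i : ℕ} (hi : i ≤ N) : (i : ℝ) / N ∈ Icc (0 : ℝ) 1 :=
  ⟨by positivity, div_le_one_of_le₀ (by exact_mod_cast hi) N.cast_nonneg⟩

theorem add_div_natCast_mem_uIcc {i k : ℕ} (hk : k ≤ 1) :
    ((i + k : ℕ) : ℝ) / N ∈ uIcc ((i : ℝ) / N) ((i + 1 : ℕ) / N) := by
  apply Icc_subset_uIcc
  exact ⟨by gcongr; omega, by gcongr⟩

theorem mem_ball_div_natCast {δ : ℝ} (hN : 1 / (N : ℝ) < δ) {i : ℕ} {t : ℝ}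
    (ht : t ∈ uIcc ((i : ℝ) / N) ((i + 1 : ℕ) / N)) : t ∈ ball ((i : ℝ) / N) δ := by
  have hle : (i : ℝ) / N ≤ (i + 1 : ℕ) / N := by gcongr; omega
  rw [uIcc_of_le hle, Nat.cast_succ, add_div] at ht
  rw [mem_ball, Real.dist_eq, abs_lt]
  constructor <;> linarith [ht.1, ht.2, show (0 : ℝ) ≤ 1 / N by positivity]

end UniformPartition

section ClosedOneForm

variable {E : Type*} [NormedAddCommGroup E] [NormedSpace ℝ E] {α : E → E →L[ℝ] ℝ} {s : Set E}

def IsPrimitiveOn (α : E → E →L[ℝ] ℝ) (f : E → ℝ) (B : Set E) : Prop :=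
  ∀ z ∈ B, HasFDerivAt f (α z) z

theorem IsPrimitiveOn.sub_eq_sub {f g : E → ℝ} {B₁ B₂ : Set E} (hf : IsPrimitiveOn α f B₁)
    (hg : IsPrimitiveOn α g B₂) (hB₁ : Convex ℝ B₁) (hB₂ : Convex ℝ B₂) {x y : E}
    (hx : x ∈ B₁ ∩ B₂) (hy : y ∈ B₁ ∩ B₂) : f x - f y = g x - g y := by
  have hderiv : ∀ z ∈ B₁ ∩ B₂, HasFDerivWithinAt (f - g) (0 : E →L[ℝ] ℝ) (B₁ ∩ B₂) z :=
    fun z hz => by simpa using ((hf z hz.1).sub (hg z hz.2)).hasFDerivWithinAt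
  have := (hB₁.inter hB₂).norm_image_sub_le_of_norm_hasFDerivWithin_le hderiv
    (fun _ _ => norm_zero.le) hy hx
  rw [zero_mul, norm_le_zero_iff, Pi.sub_apply, Pi.sub_apply] at this
  linarith

theorem IsPrimitiveOn.integral_eq_sub {f : E → ℝ} {B : Set E} (hf : IsPrimitiveOn α f B)
    {γ γ' : ℝ → E} {a b : ℝ} (hγ : ∀ t ∈ uIcc a b, HasDerivAt γ (γ' t) t)
    (hγB : MapsTo γ (uIcc a b) B)
    (hint : IntervalIntegrable (fun t => α (γ t) (γ' t)) MeasureTheory.volume a b) :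
    ∫ t in a..b, α (γ t) (γ' t) = f (γ b) - f (γ a) :=
  integral_eq_sub_of_hasDerivAt (fun t ht => (hf _ (hγB ht)).comp_hasDerivAt t (hγ t ht)) hint

theorem continuous_apply_deriv (hα : ContinuousOn α s) {γ : ℝ → E}
    (hγ : ContDiff ℝ 1 γ) (hγs : ∀ t, γ t ∈ s) : Continuous fun t => α (γ t) (deriv γ t) :=
  (hα.comp_continuous hγ.continuous hγs).clm_apply (hγ.continuous_deriv le_rfl)

theorem integral_eq_incrementSum {N : ℕ} {g : ℕ → E → ℝ} {B : ℕ → Set E}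
    (hg : ∀ i < N, IsPrimitiveOn α (g i) (B i)) {a : ℕ → ℝ} {γ : ℝ → E}
    (hγ : Differentiable ℝ γ) (hint : Continuous fun t => α (γ t) (deriv γ t))
    (hγB : ∀ i < N, MapsTo γ (uIcc (a i) (a (i + 1))) (B i)) :
    ∫ t in a 0..a N, α (γ t) (deriv γ t) = incrementSum g (γ ∘ a) N := by
  rw [← sum_integral_adjacent_intervals fun i _ => hint.intervalIntegrable _ _]
  exact Finset.sum_congr rfl fun i hi => (hg i (Finset.mem_range.1 hi)).integral_eq_sub
    (fun t _ => (hγ t).hasDerivAt) (hγB i (Finset.mem_range.1 hi)) (hint.intervalIntegrable _ _)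

theorem integral_eq_incrementSum_div {N : ℕ} (hN : N ≠ 0) {g : ℕ → E → ℝ} {B : ℕ → Set E}
    (hg : ∀ i < N, IsPrimitiveOn α (g i) (B i)) {γ : ℝ → E} (hγ : Differentiable ℝ γ)
    (hint : Continuous fun t => α (γ t) (deriv γ t))
    (hγB : ∀ i < N, MapsTo γ (uIcc ((i : ℝ) / N) ((i + 1 : ℕ) / N)) (B i)) :
    ∫ t in (0:ℝ)..1, α (γ t) (deriv γ t) = incrementSum g (fun i => γ (i / N)) N := by
  have := integral_eq_incrementSum (a := fun i : ℕ => (i : ℝ) / N) hg hγ hint hγB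
  rwa [Nat.cast_zero, zero_div, div_self (Nat.cast_ne_zero.2 hN)] at this

section Chain

variable {N : ℕ} {g : ℕ → E → ℝ} {B : ℕ → Set E}

theorem incrementSum_congr_primitive {g' : ℕ → E → ℝ} {B' : ℕ → Set E}
    (hg : ∀ i < N, IsPrimitiveOn α (g i) (B i)) (hg' : ∀ i < N, IsPrimitiveOn α (g' i) (B' i))
    (hB : ∀ i < N, Convex ℝ (B i)) (hB' : ∀ i < N, Convex ℝ (B' i)) {p : ℕ → E}
    (hp : ∀ i < N, p i ∈ B i ∩ B' i ∧ p (i + 1) ∈ B i ∩ B' i) :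
    incrementSum g p N = incrementSum g' p N :=
  Finset.sum_congr rfl fun i hi => by
    have hi := Finset.mem_range.1 hi
    exact (hg i hi).sub_eq_sub (hg' i hi) (hB i hi) (hB' i hi) (hp i hi).2 (hp i hi).1

/-- Discrete homotopy invariance across a single strip of cells. -/
theorem incrementSum_eq_of_mem (hg : ∀ i < N, IsPrimitiveOn α (g i) (B i))
    (hB : ∀ i < N, Convex ℝ (B i)) {p q : ℕ → E}
    (hp : ∀ i < N, p i ∈ B i ∧ p (i + 1) ∈ B i) (hq : ∀ i < N, q i ∈ B i ∧ q (i + 1) ∈ B i)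
    (h0 : p 0 = q 0) (hN : p N = q N) :
    incrementSum g p N = incrementSum g q N := by
  have key : ∀ m < N, incrementSum g p (m + 1) - incrementSum g q (m + 1) =
      g m (p (m + 1)) - g m (q (m + 1)) := by
    intro m hm
    induction m with
    | zero => simp [incrementSum, h0]
    | succ m ih =>
      have hjump := (hg m (by omega)).sub_eq_sub (hg (m + 1) hm) (hB m (by omega)) (hB _ hm)
        ⟨(hp m (by omega)).2, (hp _ hm).1⟩ ⟨(hq m (by omega)).2, (hq _ hm).1⟩
      rw [incrementSum_succ g p, incrementSum_succ g q]
      linarith [ih (by omega)]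
  rcases N with _ | n
  · rfl
  · have hlast := key n n.lt_succ_self
    rwa [hN, sub_self, sub_eq_zero] at hlast

theorem hasDerivAt_incrementSum (hg : ∀ i < N, IsPrimitiveOn α (g i) (B i))
    {p : ℝ → ℕ → E} {p' : ℕ → E} {u₀ : ℝ} (hp : ∀ i, HasDerivAt (fun u => p u i) (p' i) u₀)
    (hpB : ∀ i < N, p u₀ i ∈ B i ∧ p u₀ (i + 1) ∈ B i) :
    HasDerivAt (fun u => incrementSum g (p u) N)
      (α (p u₀ N) (p' N) - α (p u₀ 0) (p' 0)) u₀ := by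
  rw [← Finset.sum_range_sub fun i => α (p u₀ i) (p' i)]
  refine HasDerivAt.fun_sum fun i hi => ?_
  have hi := Finset.mem_range.1 hi
  exact ((hg i hi _ (hpB i hi).2).comp_hasDerivAt u₀ (hp (i + 1))).sub
    ((hg i hi _ (hpB i hi).1).comp_hasDerivAt u₀ (hp i))

end Chain

theorem incrementSum_eq_of_grid {N : ℕ} {g : ℕ → ℕ → E → ℝ} {B : ℕ → ℕ → Set E}
    (hg : ∀ i < N, ∀ j < N, IsPrimitiveOn α (g i j) (B i j))
    (hB : ∀ i < N, ∀ j < N, Convex ℝ (B i j)) {v : ℕ → ℕ → E}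
    (hv : ∀ i < N, ∀ j < N, ∀ k ≤ 1, ∀ l ≤ 1, v (i + k) (j + l) ∈ B i j)
    {z₀ z₁ : E} (h0 : ∀ j, v 0 j = z₀) (h1 : ∀ j, v N j = z₁) {j : ℕ} (hj : j < N) :
    incrementSum (g · j) (v · (j + 1)) N = incrementSum (g · 0) (v · 0) N := by
  have hstrip : ∀ j < N, incrementSum (g · j) (v · j) N = incrementSum (g · j) (v · (j + 1)) N :=
    fun j hj => incrementSum_eq_of_mem (hg · · j hj) (hB · · j hj)
      (fun i hi => ⟨hv i hi j hj 0 zero_le_one 0 zero_le_one, hv i hi j hj 1 le_rfl 0 zero_le_one⟩)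
      (fun i hi => ⟨hv i hi j hj 0 zero_le_one 1 le_rfl, hv i hi j hj 1 le_rfl 1 le_rfl⟩)
      (by rw [h0, h0]) (by rw [h1, h1])
  induction j with
  | zero => exact (hstrip 0 hj).symm
  | succ j ih =>
    have hj' : j < N := by omega
    rw [← hstrip _ hj, ← ih hj']
    exact incrementSum_congr_primitive (hg · · _ hj) (hg · · j hj') (hB · · _ hj) (hB · · j hj')
      fun i hi => ⟨⟨hv i hi _ hj 0 zero_le_one 0 zero_le_one, hv i hi j hj' 0 zero_le_one 1 le_rfl⟩,
        hv i hi _ hj 1 le_rfl 0 zero_le_one, hv i hi j hj' 1 le_rfl 1 le_rfl⟩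

theorem exists_isPrimitiveOn_of_isCompact (hs : IsOpen s)
    (hαdiff : ∀ x ∈ s, DifferentiableAt ℝ α x)
    (hαclosed : ∀ x ∈ s, ∀ u v, fderiv ℝ α x u v = fderiv ℝ α x v u)
    {X : Type*} [PseudoMetricSpace X] {K : Set X} (hK : IsCompact K) {H : X → E}
    (hH : Continuous H) (hKs : MapsTo H K s) :
    ∃ δ > 0, ∀ p ∈ K, ∃ B : Set E, ∃ f : E → ℝ,
      Convex ℝ B ∧ IsPrimitiveOn α f B ∧ MapsTo H (ball p δ) B := by
  have hcover : K ⊆ ⋃ z : {z : E × ℝ // ball z.1 z.2 ⊆ s}, H ⁻¹' ball z.1.1 z.1.2 := by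
    intro p hp
    obtain ⟨r, hr, hrs⟩ := Metric.isOpen_iff.1 hs _ (hKs hp)
    exact mem_iUnion.2 ⟨⟨(H p, r), hrs⟩, mem_ball_self hr⟩
  obtain ⟨δ, hδ, hleb⟩ :=
    lebesgue_number_lemma_of_metric hK (fun _ => isOpen_ball.preimage hH) hcover
  refine ⟨δ, hδ, fun p hp => ?_⟩
  obtain ⟨⟨⟨z, r⟩, hzr⟩, hpz⟩ := hleb p hp
  obtain ⟨f, hf⟩ := (convex_ball z r).exists_forall_hasFDerivAt_of_fderiv_symmetric isOpen_ball
    (fun x hx => (hαdiff x (hzr hx)).differentiableWithinAt) fun x hx => hαclosed x (hzr hx)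
  exact ⟨ball z r, f, convex_ball z r, hf, hpz⟩

theorem integral_eq_of_homotopy (hs : IsOpen s) (hαdiff : ∀ x ∈ s, DifferentiableAt ℝ α x)
    (hαclosed : ∀ x ∈ s, ∀ u v, fderiv ℝ α x u v = fderiv ℝ α x v u) {z₀ z₁ : E}
    {x y : ℝ → E} {H : ℝ → ℝ → E} (hx : ContDiff ℝ 1 x) (hy : ContDiff ℝ 1 y)
    (hH : Continuous (Function.uncurry H)) (hHs : ∀ t u, H t u ∈ s)
    (hHx : ∀ t, H t 0 = x t) (hHy : ∀ t, H t 1 = y t)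
    (hH0 : ∀ u, H 0 u = z₀) (hH1 : ∀ u, H 1 u = z₁) :
    ∫ t in (0:ℝ)..1, α (x t) (deriv x t) = ∫ t in (0:ℝ)..1, α (y t) (deriv y t) := by
  have hαc : ContinuousOn α s := fun z hz => (hαdiff z hz).continuousAt.continuousWithinAt
  obtain ⟨δ, hδ, hprim⟩ := exists_isPrimitiveOn_of_isCompact hs hαdiff hαclosed
    (isCompact_Icc.prod isCompact_Icc) hH fun p _ => hHs p.1 p.2
  choose! B f hB hf hBH using hprim
  obtain ⟨n, hn⟩ := exists_nat_one_div_lt hδ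
  set N := n + 1
  have hN : 1 / (N : ℝ) < δ := by rwa [Nat.cast_succ]
  set a : ℕ → ℝ := fun i => (i : ℝ) / N
  have ha0 : a 0 = 0 := by simp [a]
  have haN : a N = 1 := div_self (by positivity)
  have hcorner : ∀ i ≤ N, ∀ j ≤ N, (a i, a j) ∈ Icc (0:ℝ) 1 ×ˢ Icc (0:ℝ) 1 :=
    fun i hi j hj => ⟨div_natCast_mem_Icc hi, div_natCast_mem_Icc hj⟩
  have hcell : ∀ i < N, ∀ j < N, ∀ t ∈ uIcc (a i) (a (i + 1)), ∀ u ∈ uIcc (a j) (a (j + 1)),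
      H t u ∈ B (a i, a j) := fun i hi j hj t ht u hu =>
    hBH _ (hcorner i hi.le j hj.le) (show (t, u) ∈ ball (a i, a j) δ by
      rw [← ball_prod_same]; exact ⟨mem_ball_div_natCast hN ht, mem_ball_div_natCast hN hu⟩)
  have hbottom : ∫ t in (0:ℝ)..1, α (x t) (deriv x t) =
      incrementSum (fun i => f (a i, a 0)) (fun i => H (a i) (a 0)) N := by
    rw [show (fun i => H (a i) (a 0)) = fun i => x (a i) from funext fun i => by rw [ha0, hHx]]
    exact integral_eq_incrementSum_div n.succ_ne_zero
      (fun i hi => hf _ (hcorner i hi.le 0 N.zero_le)) (hx.differentiable one_ne_zero)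
      (continuous_apply_deriv hαc hx fun t => hHx t ▸ hHs t 0) fun i hi t ht => by
        rw [← hHx, ← ha0]; exact hcell i hi 0 n.succ_pos t ht _ left_mem_uIcc
  have htop : ∫ t in (0:ℝ)..1, α (y t) (deriv y t) =
      incrementSum (fun i => f (a i, a n)) (fun i => H (a i) (a N)) N := by
    rw [show (fun i => H (a i) (a N)) = fun i => y (a i) from funext fun i => by rw [haN, hHy]]
    exact integral_eq_incrementSum_div n.succ_ne_zero
      (fun i hi => hf _ (hcorner i hi.le n n.le_succ)) (hy.differentiable one_ne_zero)
      (continuous_apply_deriv hαc hy fun t => hHy t ▸ hHs t 1) fun i hi t ht => by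
        rw [← hHy, ← haN]; exact hcell i hi n n.lt_succ_self t ht _ right_mem_uIcc
  rw [hbottom, htop]
  refine (incrementSum_eq_of_grid (g := fun i j => f (a i, a j)) (B := fun i j => B (a i, a j))
    (v := fun i j => H (a i) (a j))
    (fun i hi j hj => hf _ (hcorner i hi.le j hj.le))
    (fun i hi j hj => hB _ (hcorner i hi.le j hj.le))
    (fun i hi j hj k hk l hl => hcell i hi j hj _ (add_div_natCast_mem_uIcc hk) _
      (add_div_natCast_mem_uIcc hl)) (z₀ := z₀) (z₁ := z₁) (fun j => ?_) (fun j => ?_)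
    n.lt_succ_self).symm
  · show H (a 0) (a j) = z₀
    rw [ha0, hH0]
  · show H (a N) (a j) = z₁
    rw [haN, hH1]

theorem hasDerivAt_integral_of_contDiff (hs : IsOpen s)
    (hαdiff : ∀ x ∈ s, DifferentiableAt ℝ α x)
    (hαclosed : ∀ x ∈ s, ∀ u v, fderiv ℝ α x u v = fderiv ℝ α x v u) {z₀ : E}
    {H : ℝ → ℝ → E} (hH : ContDiff ℝ 1 (Function.uncurry H)) (hHs : ∀ t u, H t u ∈ s)
    (hH0 : ∀ u, H 0 u = z₀) (u₀ : ℝ) :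
    HasDerivAt (fun u => ∫ t in (0:ℝ)..1, α (H t u) (deriv (fun τ => H τ u) t))
      (α (H 1 u₀) (deriv (fun u => H 1 u) u₀)) u₀ := by
  have hαc : ContinuousOn α s := fun z hz => (hαdiff z hz).continuousAt.continuousWithinAt
  obtain ⟨δ, hδ, hprim⟩ := exists_isPrimitiveOn_of_isCompact hs hαdiff hαclosed
    (isCompact_Icc.prod isCompact_singleton : IsCompact (Icc (0:ℝ) 1 ×ˢ {u₀})) hH.continuous
    fun p _ => hHs p.1 p.2
  choose! B f _ hf hBH using hprim
  obtain ⟨n, hn⟩ := exists_nat_one_div_lt hδ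
  set N := n + 1
  have hN : 1 / (N : ℝ) < δ := by rwa [Nat.cast_succ]
  set a : ℕ → ℝ := fun i => (i : ℝ) / N
  have ha0 : a 0 = 0 := by simp [a]
  have haN : a N = 1 := div_self (by positivity)
  have hcorner : ∀ i ≤ N, (a i, u₀) ∈ Icc (0:ℝ) 1 ×ˢ {u₀} :=
    fun i hi => ⟨div_natCast_mem_Icc hi, rfl⟩
  have hcell : ∀ i < N, ∀ t ∈ uIcc (a i) (a (i + 1)), ∀ u ∈ ball u₀ δ, H t u ∈ B (a i, u₀) :=
    fun i hi t ht u hu => hBH _ (hcorner i hi.le) (show (t, u) ∈ ball (a i, u₀) δ by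
      rw [← ball_prod_same]; exact ⟨mem_ball_div_natCast hN ht, hu⟩)
  have hrow : ∀ u, ContDiff ℝ 1 fun t => H t u :=
    fun u => hH.comp (contDiff_id.prodMk contDiff_const)
  have hcol : ∀ t, ContDiff ℝ 1 fun u => H t u :=
    fun t => hH.comp (contDiff_const.prodMk contDiff_id)
  have hsum : ∀ u ∈ ball u₀ δ, ∫ t in (0:ℝ)..1, α (H t u) (deriv (fun τ => H τ u) t) =
      incrementSum (fun i => f (a i, u₀)) (fun i => H (a i) u) N :=
    fun u hu => integral_eq_incrementSum_div n.succ_ne_zero (fun i hi => hf _ (hcorner i hi.le))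
      ((hrow u).differentiable one_ne_zero) (continuous_apply_deriv hαc (hrow u) (hHs · u))
      fun i hi t ht => hcell i hi t ht u hu
  have hderiv := hasDerivAt_incrementSum (fun i hi => hf _ (hcorner i hi.le))
    (p := fun u i => H (a i) u) (fun i => ((hcol (a i)).differentiable one_ne_zero u₀).hasDerivAt)
    fun i hi => ⟨hcell i hi _ left_mem_uIcc u₀ (mem_ball_self hδ),
      hcell i hi _ right_mem_uIcc u₀ (mem_ball_self hδ)⟩
  simp only [haN, ha0, hH0, deriv_const', map_zero, sub_zero] at hderiv
  exact hderiv.congr_of_eventuallyEq (Filter.eventually_of_mem (ball_mem_nhds u₀ hδ) hsum)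

end ClosedOneForm

theorem stmt10_general {E : Type*} [NormedAddCommGroup E] [NormedSpace ℝ E]
    (s : Set E) (hs : IsOpen s)
    (α : E → E →L[ℝ] ℝ)
    (hαdiff : ∀ x ∈ s, DifferentiableAt ℝ α x)
    (hαclosed : ∀ x ∈ s, ∀ u v, fderiv ℝ α x u v = fderiv ℝ α x v u)
    (z₀ z₁ : E) :
    (∀ (x y : ℝ → E) (H : ℝ → ℝ → E),
        ContDiff ℝ 1 x → ContDiff ℝ 1 y →
        Continuous (Function.uncurry H) →
        (∀ t u, H t u ∈ s) →
        (∀ t, H t 0 = x t) → (∀ t, H t 1 = y t) →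
        (∀ u, H 0 u = z₀) → (∀ u, H 1 u = z₁) →
        ∫ t in (0:ℝ)..1, α (x t) (deriv x t) = ∫ t in (0:ℝ)..1, α (y t) (deriv y t))
    ∧
    (∀ (H : ℝ → ℝ → E) (u₀ : ℝ),
        ContDiff ℝ 1 (Function.uncurry H) →
        (∀ t u, H t u ∈ s) → (∀ u, H 0 u = z₀) →
        HasDerivAt (fun u => ∫ t in (0:ℝ)..1, α (H t u) (deriv (fun τ => H τ u) t))
          (α (H 1 u₀) (deriv (fun u => H 1 u) u₀)) u₀) :=
  ⟨fun _ _ _ hx hy hH hHs hHx hHy hH0 hH1 =>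
    integral_eq_of_homotopy hs hαdiff hαclosed hx hy hH hHs hHx hHy hH0 hH1,
   fun _ u₀ hH hHs hH0 => hasDerivAt_integral_of_contDiff hs hαdiff hαclosed hH hHs hH0 u₀⟩

/-- let `(M,ω)` be a connected symplectic manifold (modeled here as a
connected open set `s` of a real normed space `E` with a smooth skew-symmetric closed
nondegenerate-free 2-form `ω`), with a symplectic group action whose infinitesimal
generator for `ξ ∈ 𝔤` is the vector field `X`, so `α = ι_{ξ_M} ω` is a closed 1-form.
Then:
(a) the integral `∫₀¹ ω(x(t))(ξ_M(x(t)), ẋ(t)) dt` depends only on the homotopy class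
of the path `x` rel endpoints, so it defines a map `J^ξ` on the universal cover `M̃`;
(b) `J^ξ` is a momentum map for the lifted action: its derivative along any smooth
family of paths (all beginning at `z₀`, i.e. a curve in `M̃`) is `α = ι_{ξ_M}ω`
evaluated at the endpoint on the endpoint velocity, i.e. `d⟨J,ξ⟩ = ι_{ξ_{M̃}} q*ω`. -/
theorem stmt10 {E : Type*} [NormedAddCommGroup E] [NormedSpace ℝ E]
    (s : Set E) (hs : IsOpen s) (hconn : IsConnected s)
    (ω : E → E →L[ℝ] E →L[ℝ] ℝ) (X : E → E)
    (hωcont : ContinuousOn ω s) (hXcont : ContinuousOn X s)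
    (hskew : ∀ x ∈ s, ∀ u v, ω x u v = - (ω x v u))
    (α : E → E →L[ℝ] ℝ) (hα : ∀ x, α x = ω x (X x))
    (hαdiff : ∀ x ∈ s, DifferentiableAt ℝ α x)
    (hαclosed : ∀ x ∈ s, ∀ u v, fderiv ℝ α x u v = fderiv ℝ α x v u)
    (z₀ z₁ : E) (hz₀ : z₀ ∈ s) (hz₁ : z₁ ∈ s) :
    (∀ (x y : ℝ → E) (H : ℝ → ℝ → E),
        ContDiff ℝ 1 x → ContDiff ℝ 1 y →
        Continuous (Function.uncurry H) →
        (∀ t u, H t u ∈ s) →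
        (∀ t, H t 0 = x t) → (∀ t, H t 1 = y t) →
        (∀ u, H 0 u = z₀) → (∀ u, H 1 u = z₁) →
        ∫ t in (0:ℝ)..1, α (x t) (deriv x t) = ∫ t in (0:ℝ)..1, α (y t) (deriv y t))
    ∧
    (∀ (H : ℝ → ℝ → E) (u₀ : ℝ),
        ContDiff ℝ 1 (Function.uncurry H) →
        (∀ t u, H t u ∈ s) → (∀ u, H 0 u = z₀) →
        HasDerivAt (fun u => ∫ t in (0:ℝ)..1, α (H t u) (deriv (fun τ => H τ u) t))
          (α (H 1 u₀) (deriv (fun u => H 1 u) u₀)) u₀) :=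
  stmt10_general s hs α hαdiff hαclosed z₀ z₁
end

section
/- With J : M̃ → 𝔤* the momentum map on the universal cover defined by path integrals ⟨J(x̃),ξ⟩ = ∫₀¹ ω(ξ_M(x(t)), ẋ(t)) dt, one has J(x̃ * ỹ) = J(x̃) + J(ỹ) for every x̃ ∈ π₁(M,z₀) and ỹ ∈ M̃, where * is concatenation of path classes. -/
open MeasureTheory intervalIntegral Set Filter Topology

/-!
On `[0, 1/2]` the concatenation is `t ↦ x (2t)` and on `[1/2, 1]` it is `t ↦ y (2t - 1)`, so on
each half the integrand is `2 • g (2t + c)` for the integrand `g` of `x` or of `y`, and the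
substitution `s = 2t + c` turns the half-integral into the full integral along `x` or `y`.
The point `t = 1/2`, where the concatenation may fail to be differentiable, is a null set.
-/

section

variable {E F : Type*}

/-- Unlike `Path.trans`, this is defined on all of `ℝ` and does not require `x 1 = y 0`. -/
noncomputable def concatCurve (x y : ℝ → E) : ℝ → E :=
  fun t => if t ≤ 1/2 then x (2*t) else y (2*t - 1)

section ConcatCurve

variable (x y : ℝ → E) {t : ℝ}

theorem concatCurve_eventuallyEq_of_lt_half (ht : t < 1/2) :
    concatCurve x y =ᶠ[𝓝 t] fun s => x (2*s) := by
  filter_upwards [Iio_mem_nhds ht] with s hs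
  exact if_pos hs.le

theorem concatCurve_eventuallyEq_of_half_lt (ht : 1/2 < t) :
    concatCurve x y =ᶠ[𝓝 t] fun s => y (2*s - 1) := by
  filter_upwards [Ioi_mem_nhds ht] with s hs
  exact if_neg (not_le.mpr hs)

end ConcatCurve

variable [NormedAddCommGroup E] [NormedSpace ℝ E] [NormedAddCommGroup F] [NormedSpace ℝ F]

theorem continuous_clm_apply_deriv {α : E → E →L[ℝ] F} (hα : Continuous α) {γ : ℝ → E}
    (hγ : ContDiff ℝ 1 γ) : Continuous fun t => α (γ t) (deriv γ t) :=
  (hα.comp hγ.continuous).clm_apply (hγ.continuous_deriv le_rfl)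

section ConcatCurveIntegral

variable (α : E → E →L[ℝ] F) (x y : ℝ → E) {t : ℝ}

theorem concatCurve_integrand_of_lt_half (ht : t < 1/2) :
    α (concatCurve x y t) (deriv (concatCurve x y) t)
      = (2:ℝ) • α (x (2*t)) (deriv x (2*t)) := by
  have h := concatCurve_eventuallyEq_of_lt_half x y ht
  rw [h.eq_of_nhds, h.deriv_eq, deriv_comp_mul_left, map_smul]

theorem concatCurve_integrand_of_half_lt (ht : 1/2 < t) :
    α (concatCurve x y t) (deriv (concatCurve x y) t)
      = (2:ℝ) • α (y (2*t - 1)) (deriv y (2*t - 1)) := by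
  have h := concatCurve_eventuallyEq_of_half_lt x y ht
  have hd : deriv (fun s => y (2*s - 1)) t = (2:ℝ) • deriv y (2*t - 1) := by
    simpa only [deriv_comp_sub_const] using deriv_comp_mul_left (2:ℝ) (fun u => y (u - 1)) t
  rw [h.eq_of_nhds, h.deriv_eq, hd, map_smul]

theorem integral_concatCurve_left :
    ∫ t in (0:ℝ)..1/2, α (concatCurve x y t) (deriv (concatCurve x y) t)
      = ∫ t in (0:ℝ)..1, α (x t) (deriv x t) := by
  rw [integral_congr_Ioo_of_le (by norm_num)
      fun t ht => concatCurve_integrand_of_lt_half α x y ht.2,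
    intervalIntegral.integral_smul, smul_integral_comp_mul_left (fun s => α (x s) (deriv x s))]
  norm_num

theorem integral_concatCurve_right :
    ∫ t in (1/2:ℝ)..1, α (concatCurve x y t) (deriv (concatCurve x y) t)
      = ∫ t in (0:ℝ)..1, α (y t) (deriv y t) := by
  rw [integral_congr_Ioo_of_le (by norm_num)
      fun t ht => concatCurve_integrand_of_half_lt α x y ht.1,
    intervalIntegral.integral_smul, smul_integral_comp_mul_sub (fun s => α (y s) (deriv y s))]
  norm_num

theorem intervalIntegrable_concatCurve_left (hx : Continuous fun t => α (x t) (deriv x t)) :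
    IntervalIntegrable (fun t => α (concatCurve x y t) (deriv (concatCurve x y) t))
      volume 0 (1/2) := by
  have hcont : Continuous fun t => (2:ℝ) • α (x (2*t)) (deriv x (2*t)) :=
    (hx.comp (continuous_const_mul 2)).const_smul (2:ℝ)
  refine (hcont.intervalIntegrable _ _).congr_uIoo
    fun t ht => (concatCurve_integrand_of_lt_half α x y ?_).symm
  rw [uIoo_of_le (by norm_num)] at ht
  exact ht.2

theorem intervalIntegrable_concatCurve_right (hy : Continuous fun t => α (y t) (deriv y t)) :
    IntervalIntegrable (fun t => α (concatCurve x y t) (deriv (concatCurve x y) t))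
      volume (1/2) 1 := by
  have hcont : Continuous fun t => (2:ℝ) • α (y (2*t - 1)) (deriv y (2*t - 1)) :=
    (hy.comp (by fun_prop : Continuous fun t : ℝ => 2*t - 1)).const_smul (2:ℝ)
  refine (hcont.intervalIntegrable _ _).congr_uIoo
    fun t ht => (concatCurve_integrand_of_half_lt α x y ?_).symm
  rw [uIoo_of_le (by norm_num)] at ht
  exact ht.1

theorem integral_concatCurve (hx : Continuous fun t => α (x t) (deriv x t))
    (hy : Continuous fun t => α (y t) (deriv y t)) :
    ∫ t in (0:ℝ)..1, α (concatCurve x y t) (deriv (concatCurve x y) t)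
      = (∫ t in (0:ℝ)..1, α (x t) (deriv x t))
        + ∫ t in (0:ℝ)..1, α (y t) (deriv y t) := by
  rw [← integral_add_adjacent_intervals (intervalIntegrable_concatCurve_left α x y hx)
    (intervalIntegrable_concatCurve_right α x y hy),
    integral_concatCurve_left, integral_concatCurve_right]

end ConcatCurveIntegral

end

theorem stmt11_general {E : Type*} [NormedAddCommGroup E] [NormedSpace ℝ E]
    (ω : E → E →L[ℝ] E →L[ℝ] ℝ) (X : E → E)
    (hωcont : Continuous ω) (hXcont : Continuous X)
    (α : E → E →L[ℝ] ℝ) (hα : ∀ x, α x = ω x (X x))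
    (x y : ℝ → E)
    (hx : ContDiff ℝ 1 x) (hy : ContDiff ℝ 1 y) :
    (∫ t in (0:ℝ)..1,
        α ((fun t => if t ≤ 1/2 then x (2*t) else y (2*t - 1)) t)
          (deriv (fun t => if t ≤ 1/2 then x (2*t) else y (2*t - 1)) t))
      = (∫ t in (0:ℝ)..1, α (x t) (deriv x t))
        + ∫ t in (0:ℝ)..1, α (y t) (deriv y t) := by
  have hαcont : Continuous α := by
    rw [funext hα]
    exact hωcont.clm_apply hXcont
  exact integral_concatCurve α x y (continuous_clm_apply_deriv hαcont hx)
    (continuous_clm_apply_deriv hαcont hy)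

/-- additivity of the momentum map `J` on the universal cover under
concatenation with loops: with `α = ι_{ξ_M}ω` the 1-form `v ↦ ω(ξ_M, v)` and with
`x` a loop at `z₀` and `y` a path starting at `z₀`, the integral of `α` along the
concatenation `x * y` equals the sum of the integrals along `x` and along `y`;
i.e. `J(x̃ * ỹ) = J(x̃) + J(ỹ)`. -/
theorem stmt11 {E : Type*} [NormedAddCommGroup E] [NormedSpace ℝ E]
    (ω : E → E →L[ℝ] E →L[ℝ] ℝ) (X : E → E)
    (hωcont : Continuous ω) (hXcont : Continuous X)
    (hskew : ∀ x u v, ω x u v = - (ω x v u))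
    (α : E → E →L[ℝ] ℝ) (hα : ∀ x, α x = ω x (X x))
    (z₀ : E) (x y : ℝ → E)
    (hx : ContDiff ℝ 1 x) (hy : ContDiff ℝ 1 y)
    (hx0 : x 0 = z₀) (hx1 : x 1 = z₀) (hy0 : y 0 = z₀) :
    (∫ t in (0:ℝ)..1,
        α ((fun t => if t ≤ 1/2 then x (2*t) else y (2*t - 1)) t)
          (deriv (fun t => if t ≤ 1/2 then x (2*t) else y (2*t - 1)) t))
      = (∫ t in (0:ℝ)..1, α (x t) (deriv x t))
        + ∫ t in (0:ℝ)..1, α (y t) (deriv y t) :=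
  stmt11_general ω X hωcont hXcont α hα x y hx hy
end

section
/- Let (M,ω) be a connected symplectic manifold with symplectic action of a connected Lie group G, J : M̃ → 𝔤* the lifted momentum map, Γ = π₁(M,z₀), and ℋ = J(Γ) the Hamiltonian holonomy. A cover p : (N,y₀) → (M,z₀) is Hamiltonian (i.e. J descends to a well-defined momentum map on N = M̃/Γ_N) if and only if J(Γ_N) = 0, where Γ_N = p_*(π₁(N,y₀)). Equivalently, the Hamiltonian covers of M correspond exactly to the subgroups of Γ₀ = ker(J|_Γ). -/
section EquivariantDescent

variable {G X A : Type*} [Group G] [MulAction G X]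

theorem exists_quotient_orbitRel_lift_iff_forall_eq_smul (J : X → A) :
    (∃ J' : Quotient (MulAction.orbitRel G X) → A,
        ∀ x : X, J' (Quotient.mk (MulAction.orbitRel G X) x) = J x) ↔
      ∀ (g : G) (x : X), J (g • x) = J x := by
  constructor
  · rintro ⟨J', hJ'⟩ g x
    rw [← hJ', ← hJ', Quotient.sound (MulAction.mem_orbit x g)]
  · intro hinv
    refine ⟨Quotient.lift J ?_, fun _ => rfl⟩
    rintro _ y ⟨g, rfl⟩
    exact hinv g y

variable [AddGroup A] {φ : G → A} {J : X → A}

theorem eq_smul_iff_of_map_smul_eq_add (hJ : ∀ (g : G) (x : X), J (g • x) = φ g + J x)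
    (g : G) (x : X) : J (g • x) = J x ↔ φ g = 0 := by
  rw [hJ, add_eq_right]

theorem exists_quotient_orbitRel_lift_iff_of_map_smul_eq_add [Nonempty X]
    (hJ : ∀ (g : G) (x : X), J (g • x) = φ g + J x) :
    (∃ J' : Quotient (MulAction.orbitRel G X) → A,
        ∀ x : X, J' (Quotient.mk (MulAction.orbitRel G X) x) = J x) ↔ ∀ g : G, φ g = 0 := by
  obtain ⟨x₀⟩ := ‹Nonempty X›
  rw [exists_quotient_orbitRel_lift_iff_forall_eq_smul]
  simp only [eq_smul_iff_of_map_smul_eq_add hJ]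
  exact ⟨fun h g => h g x₀, fun h g _ => h g⟩

end EquivariantDescent

theorem stmt12_general {Γ X A : Type*} [Group Γ] [MulAction Γ X] [Nonempty X] [AddCommGroup A]
    (φ : Γ → A)
    (J : X → A) (hJ : ∀ (γ : Γ) (x : X), J (γ • x) = φ γ + J x)
    (Γ₁ : Subgroup Γ) :
    ((∃ J' : Quotient (MulAction.orbitRel Γ₁ X) → A,
        ∀ x : X, J' (Quotient.mk (MulAction.orbitRel Γ₁ X) x) = J x) ↔
      ∀ γ ∈ Γ₁, φ γ = 0)
    ∧ ((∀ γ ∈ Γ₁, φ γ = 0) ↔ (Γ₁ : Set Γ) ⊆ {γ : Γ | φ γ = 0}) := by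
  refine ⟨?_, Iff.rfl⟩
  rw [exists_quotient_orbitRel_lift_iff_of_map_smul_eq_add (φ := fun γ : Γ₁ => φ γ)
    fun γ x => hJ γ x]
  exact Subtype.forall

/-- abstract form of the classification of Hamiltonian covers.  Let
`Γ = π₁(M,z₀)` act (by deck transformations) on the universal cover `X = M̃`, let
`J : X → 𝔤*` be the lifted momentum map and `φ = J|_Γ` its restriction to the fibre
over the base point, a homomorphism into `(𝔤*,+)` satisfying `J(γ·x) = φ(γ) + J(x)`.
For a subgroup `Γ₁ = Γ_N` (so that `N = M̃/Γ_N`), the cover `N` is Hamiltonian — i.e.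
`J` descends to a well-defined momentum map on `M̃/Γ_N` — if and only if `φ(Γ_N) = 0`,
equivalently if and only if `Γ_N` is contained in `Γ₀ = ker(J|_Γ)`. -/
theorem stmt12 {Γ X A : Type*} [Group Γ] [MulAction Γ X] [Nonempty X] [AddCommGroup A]
    (φ : Γ → A) (hφ : ∀ γ δ : Γ, φ (γ * δ) = φ γ + φ δ)
    (J : X → A) (hJ : ∀ (γ : Γ) (x : X), J (γ • x) = φ γ + J x)
    (Γ₁ : Subgroup Γ) :
    ((∃ J' : Quotient (MulAction.orbitRel Γ₁ X) → A,
        ∀ x : X, J' (Quotient.mk (MulAction.orbitRel Γ₁ X) x) = J x) ↔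
      ∀ γ ∈ Γ₁, φ γ = 0)
    ∧ ((∀ γ ∈ Γ₁, φ γ = 0) ↔ (Γ₁ : Set Γ) ⊆ {γ : Γ | φ γ = 0}) :=
  stmt12_general φ J hJ Γ₁
end

section
/- Let H be the Heisenberg group (S¹ × ℝ², with multiplication (α,u)(β,v) = (α+β+½ω̄(u,v), u+v), universal cover ℝ × ℝ² with ω in place of ω̄, where ω is the standard symplectic form on ℝ²). For a nonzero linear map σ : ℝ² → ℝ, the integrated cocycle on the universal cover is Θ(α,u) = (σ(u), −ασ − ½σ(u)ι_uω) ∈ 𝔤* ≅ ℝ* × (ℝ²)*, and the Hamiltonian holonomy Θ(ℤ × {0}) = {0} × ℤσ is a closed (discrete) subgroup of 𝔤*. -/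
/-- The standard symplectic form on `ℝ²`. -/
def omega2 (u v : ℝ × ℝ) : ℝ := u.1 * v.2 - u.2 * v.1

/-!
Along a path `g = (a, w)` the integrand of `Θ` is an exact derivative: its first component is
`d/dt σ(w)`, and its second component, evaluated at `v`, is `d/dt (-a σ(v) - ½ σ(w) ω(w, v))`.
The latter rests on the identity `ω(a, b) σ(c) + ω(b, c) σ(a) + ω(c, a) σ(b) = 0`, which holds
because an alternating trilinear form on `ℝ²` vanishes. So `Θ` only depends on the endpoint of the
path, and on `ℤ × {0}` it takes the values `(0, -nσ)`: the image of the closed set `-ℤ` under the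
closed map `r ↦ r • (0, σ)`.
-/

theorem omega2_mul_add_omega2_mul_add_omega2_mul {F : Type*} [FunLike F (ℝ × ℝ) ℝ]
    [LinearMapClass F ℝ (ℝ × ℝ) ℝ] (σ : F) (a b c : ℝ × ℝ) :
    omega2 a b * σ c + omega2 b c * σ a + omega2 c a * σ b = 0 := by
  have hσ (x : ℝ × ℝ) : σ x = x.1 * σ (1, 0) + x.2 * σ (0, 1) := by
    calc σ x = σ (x.1 • (1, 0) + x.2 • (0, 1)) := by congr 1; ext <;> simp
      _ = x.1 * σ (1, 0) + x.2 * σ (0, 1) := by simp only [map_add, map_smul, smul_eq_mul]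
  simp only [omega2, hσ a, hσ b, hσ c]
  ring

theorem HasDerivAt.omega2_left {w : ℝ → ℝ × ℝ} {w' : ℝ × ℝ} {t : ℝ} (hw : HasDerivAt w w' t)
    (v : ℝ × ℝ) : HasDerivAt (fun τ => omega2 (w τ) v) (omega2 w' v) t := by
  have hw₁ : HasDerivAt (fun τ => (w τ).1) w'.1 t := hw.fst
  have hw₂ : HasDerivAt (fun τ => (w τ).2) w'.2 t := hw.snd
  exact (hw₁.mul_const v.2).sub (hw₂.mul_const v.1)

theorem hasDerivAt_neg_mul_sub_half_mul_omega2 (σ : ℝ × ℝ →L[ℝ] ℝ) (v : ℝ × ℝ) {a : ℝ → ℝ}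
    {w : ℝ → ℝ × ℝ} {a' t : ℝ} {w' : ℝ × ℝ} (ha : HasDerivAt a a' t) (hw : HasDerivAt w w' t) :
    HasDerivAt (fun τ => -a τ * σ v - 1 / 2 * σ (w τ) * omega2 (w τ) v)
      (-(a' - 1 / 2 * omega2 (w t) w') * σ v - σ w' * omega2 (w t) v) t := by
  have h := (ha.neg.mul_const (σ v)).sub
    (((σ.hasFDerivAt.comp_hasDerivAt t hw).const_mul (1 / 2)).mul (hw.omega2_left v))
  refine h.congr_deriv ?_
  have hcyc := omega2_mul_add_omega2_mul_add_omega2_mul σ (w t) w' v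
  simp only [omega2, Function.comp_apply] at hcyc ⊢
  linear_combination -(1 / 2) * hcyc

theorem integral_clm_apply_deriv {E F : Type*} [NormedAddCommGroup E] [NormedSpace ℝ E]
    [NormedAddCommGroup F] [NormedSpace ℝ F] [CompleteSpace F] (σ : E →L[ℝ] F) {w : ℝ → E}
    (hw : ContDiff ℝ 1 w) (s t : ℝ) :
    ∫ τ in s..t, σ (deriv w τ) = σ (w t) - σ (w s) :=
  intervalIntegral.integral_eq_sub_of_hasDerivAt
    (fun τ _ => σ.hasFDerivAt.comp_hasDerivAt τ (hw.differentiable one_ne_zero τ).hasDerivAt)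
    ((σ.continuous.comp (hw.continuous_deriv le_rfl)).intervalIntegrable s t)

theorem integral_deriv_neg_mul_sub_half_mul_omega2 (σ : ℝ × ℝ →L[ℝ] ℝ) (v : ℝ × ℝ) {a : ℝ → ℝ}
    {w : ℝ → ℝ × ℝ} (ha : ContDiff ℝ 1 a) (hw : ContDiff ℝ 1 w) (s t : ℝ) :
    ∫ τ in s..t, (-(deriv a τ - 1 / 2 * omega2 (w τ) (deriv w τ)) * σ v
        - σ (deriv w τ) * omega2 (w τ) v)
      = (-a t * σ v - 1 / 2 * σ (w t) * omega2 (w t) v)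
        - (-a s * σ v - 1 / 2 * σ (w s) * omega2 (w s) v) := by
  refine intervalIntegral.integral_eq_sub_of_hasDerivAt (fun τ _ =>
    hasDerivAt_neg_mul_sub_half_mul_omega2 σ v (ha.differentiable one_ne_zero τ).hasDerivAt
      (hw.differentiable one_ne_zero τ).hasDerivAt) (Continuous.intervalIntegrable ?_ s t)
  have hda := ha.continuous_deriv le_rfl
  have hdw := hw.continuous_deriv le_rfl
  have hcw := hw.continuous
  unfold omega2
  fun_prop

theorem stmt18_general (σ : (ℝ × ℝ) →L[ℝ] ℝ) :
    (∀ (α : ℝ) (u : ℝ × ℝ) (g : ℝ → ℝ × (ℝ × ℝ)),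
      ContDiff ℝ 1 g → g 0 = 0 → g 1 = (α, u) →
      ((∫ t in (0:ℝ)..1, σ (deriv (fun τ => (g τ).2) t)) = σ u ∧
       ∀ v : ℝ × ℝ,
        (∫ t in (0:ℝ)..1,
          (-(deriv (fun τ => (g τ).1) t
              - (1/2) * omega2 ((g t).2) (deriv (fun τ => (g τ).2) t)) * σ v
            - σ (deriv (fun τ => (g τ).2) t) * omega2 ((g t).2) v))
          = -α * σ v - (1/2) * σ u * omega2 u v))
    ∧
    IsClosed {μ : ℝ × ((ℝ × ℝ) →L[ℝ] ℝ) | ∃ n : ℤ, μ = (0, -(n : ℝ) • σ)} := by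
  refine ⟨fun α u g hg h0 h1 => ⟨?_, fun v => ?_⟩, ?_⟩
  · rw [integral_clm_apply_deriv σ hg.snd, h0, h1]
    simp
  · refine (integral_deriv_neg_mul_sub_half_mul_omega2 σ v hg.fst hg.snd 0 1).trans ?_
    simp [h0, h1, omega2]
  · have himage : {μ : ℝ × ((ℝ × ℝ) →L[ℝ] ℝ) | ∃ n : ℤ, μ = (0, -(n : ℝ) • σ)} =
        (fun r : ℝ => r • ((0 : ℝ), σ)) '' Set.range (Neg.neg ∘ ((↑) : ℤ → ℝ)) := by
      ext μ
      simp [eq_comm]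
    rw [himage]
    exact isClosedMap_smul_left (𝕜 := ℝ) ((0 : ℝ), σ) _
      ((Homeomorph.neg ℝ).isClosedEmbedding.comp Int.isClosedEmbedding_coe_real).isClosed_range

/-- for the Heisenberg group `H̃ = ℝ × ℝ²` (multiplication
`(α,u)(β,v) = (α+β+½ω(u,v), u+v)`, universal cover of the central extension
`G = S¹ × ℝ²`), with the Lie algebra cocycle `θ(a,v) = (σv, −aσ)` determined by a
nonzero `σ : ℝ² → ℝ`, the integrated cocycle
`Θ(g̃) = ∫₀¹ Ad*_{g(t)⁻¹} θ(g(t)⁻¹ġ(t)) dt` (whose integrand, computed in these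
coordinates for `g(t) = (a(t),w(t))`, has first component `σ(ẇ)` and second component
`−(ȧ − ½ω(w,ẇ))σ − σ(ẇ)ι_wω`) satisfies
`Θ(α,u) = (σ(u), −ασ − ½σ(u) ι_uω)` for any `C¹` path `g` from the identity to `(α,u)`;
moreover the Hamiltonian holonomy `Θ(ℤ × {0}) = {0} × ℤσ` is a closed (discrete)
subgroup of `𝔤* ≅ ℝ × (ℝ²)*`. -/
theorem stmt18 (σ : (ℝ × ℝ) →L[ℝ] ℝ) (hσ : σ ≠ 0) :
    (∀ (α : ℝ) (u : ℝ × ℝ) (g : ℝ → ℝ × (ℝ × ℝ)),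
      ContDiff ℝ 1 g → g 0 = 0 → g 1 = (α, u) →
      ((∫ t in (0:ℝ)..1, σ (deriv (fun τ => (g τ).2) t)) = σ u ∧
       ∀ v : ℝ × ℝ,
        (∫ t in (0:ℝ)..1,
          (-(deriv (fun τ => (g τ).1) t
              - (1/2) * omega2 ((g t).2) (deriv (fun τ => (g τ).2) t)) * σ v
            - σ (deriv (fun τ => (g τ).2) t) * omega2 ((g t).2) v))
          = -α * σ v - (1/2) * σ u * omega2 u v))
    ∧
    IsClosed {μ : ℝ × ((ℝ × ℝ) →L[ℝ] ℝ) | ∃ n : ℤ, μ = (0, -(n : ℝ) • σ)} :=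
  stmt18_general σ
end
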